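/- arXiv:0903.2962 — 3 statements merged into one kernel-verified Lean document; each statement's English description precedes it below -/
import Mathlib

section
/- For the symmetric Ising channel, the supremum defining c(M_β) equals (tanh β)²: for every probability vector p = (p, 1-p) with 0 < p < 1, p ≠ 1/2, the ratio L(p M_β)/L(p) is at most (tanh β)², and the bound (tanh β)² is attained in the limit p → 1/2. -/
/-!
Write a probability vector on two points through its bias `x = p₀ - p₁ ∈ (-1, 1)`. Then
`L(p) = x g(x) / 2` with `g(x) = log ((1 + x) / (1 - x))`, and the Ising channel multiplies the
bias by `tanh β`. As `g` is convex on `[0, 1)` with `g(0) = 0`, we get `g(λx) ≤ λ g(x)` for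
`0 ≤ λ ≤ 1`; since `x g(x)` is even this gives `L(p M_β) ≤ tanh² β · L(p)`. The ratio tends to
`tanh² β` because `g(x) / x → g'(0) = 2`.
-/

open Filter Real Set Topology Matrix

noncomputable def logRatio (x : ℝ) : ℝ := log (1 + x) - log (1 - x)

@[simp] lemma logRatio_zero : logRatio 0 = 0 := by simp [logRatio]

lemma logRatio_neg (x : ℝ) : logRatio (-x) = -logRatio x := by
  simp only [logRatio, sub_neg_eq_add, ← sub_eq_add_neg]
  ring

lemma hasDerivAt_logRatio {x : ℝ} (hx : x ∈ Ioo (-1) 1) :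
    HasDerivAt logRatio (2 / (1 - x ^ 2)) x := by
  obtain ⟨hx₁, hx₂⟩ := hx
  have hadd := ((hasDerivAt_id' x).const_add 1).log (by linarith)
  have hsub := ((hasDerivAt_id' x).const_sub 1).log (by linarith)
  refine (hadd.sub hsub).congr_deriv ?_
  rw [show 1 - x ^ 2 = (1 + x) * (1 - x) by ring]
  field_simp [show 1 + x ≠ 0 by linarith, show 1 - x ≠ 0 by linarith]
  ring

lemma convexOn_logRatio : ConvexOn ℝ (Ico 0 1) logRatio := by
  have hderiv {x : ℝ} (hx : x ∈ Ico 0 1) : HasDerivAt logRatio (2 / (1 - x ^ 2)) x :=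
    hasDerivAt_logRatio ⟨by linarith [hx.1], hx.2⟩
  refine MonotoneOn.convexOn_of_deriv (convex_Ico 0 1)
    (fun x hx => (hderiv hx).continuousAt.continuousWithinAt) ?_ ?_ <;> rw [interior_Ico]
  · exact fun x hx => (hderiv (Ioo_subset_Ico_self hx)).differentiableAt.differentiableWithinAt
  · intro a ha b hb hab
    rw [(hderiv (Ioo_subset_Ico_self ha)).deriv, (hderiv (Ioo_subset_Ico_self hb)).deriv]
    have : 0 < 1 - b ^ 2 := by nlinarith [hb.1, hb.2]
    gcongr
    exact ha.1.le

lemma logRatio_mul_le {l x : ℝ} (hl₀ : 0 ≤ l) (hl₁ : l ≤ 1) (hx₀ : 0 ≤ x) (hx₁ : x < 1) :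
    logRatio (l * x) ≤ l * logRatio x := by
  simpa using convexOn_logRatio.2 ⟨hx₀, hx₁⟩ (left_mem_Ico.2 zero_lt_one) hl₀ (sub_nonneg.2 hl₁)
    (add_sub_cancel l 1)

lemma abs_mul_logRatio_abs (x : ℝ) : |x| * logRatio |x| = x * logRatio x := by
  rcases abs_choice x with h | h <;> rw [h]
  rw [logRatio_neg, neg_mul_neg]

lemma mul_logRatio_mul_le {l x : ℝ} (hl : |l| ≤ 1) (hx : |x| < 1) :
    l * x * logRatio (l * x) ≤ l ^ 2 * (x * logRatio x) := by
  rw [← abs_mul_logRatio_abs x, ← abs_mul_logRatio_abs (l * x), abs_mul, ← sq_abs l]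
  have := logRatio_mul_le (abs_nonneg l) hl (abs_nonneg x) hx
  have := mul_nonneg (abs_nonneg l) (abs_nonneg x)
  nlinarith

lemma tendsto_logRatio_div_self : Tendsto (fun x => logRatio x / x) (𝓝[≠] 0) (𝓝 2) := by
  have h : HasDerivAt logRatio 2 0 := by
    simpa using hasDerivAt_logRatio (x := 0) (by norm_num)
  refine (hasDerivAt_iff_tendsto_slope.1 h).congr fun x => ?_
  simp [slope_def_field]

lemma tendsto_mul_nhdsNE_zero {l : ℝ} (hl : l ≠ 0) :
    Tendsto (fun x => l * x) (𝓝[≠] 0) (𝓝[≠] 0) :=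
  .inf (by simpa using (continuous_const_mul l).tendsto 0)
    (tendsto_principal_principal.2 fun _ hx => mul_ne_zero hl hx)

lemma tendsto_mul_logRatio_mul_div (l : ℝ) :
    Tendsto (fun x => l * x * logRatio (l * x) / (x * logRatio x)) (𝓝[≠] 0) (𝓝 (l ^ 2)) := by
  rcases eq_or_ne l 0 with rfl | hl
  · simp
  have h := ((tendsto_logRatio_div_self.comp (tendsto_mul_nhdsNE_zero hl)).div
    tendsto_logRatio_div_self two_ne_zero).const_mul (l ^ 2)
  rw [div_self two_ne_zero, mul_one] at h
  refine h.congr' (eventually_nhdsWithin_of_forall fun x (hx : x ≠ 0) => ?_)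
  rcases eq_or_ne (logRatio x) 0 with h0 | h0
  · simp [h0]
  · simp only [Pi.div_apply, Function.comp_apply]
    field_simp

lemma tanh_eq_exp_two_mul (x : ℝ) : tanh x = (exp (2 * x) - 1) / (exp (2 * x) + 1) := by
  rw [tanh_eq, show 2 * x = x + x by ring, exp_add, exp_neg]
  field_simp

noncomputable def isingMatrix (β : ℝ) : Matrix (Fin 2) (Fin 2) ℝ := fun i j =>
  if i = j then exp (2 * β) / (exp (2 * β) + 1) else 1 / (exp (2 * β) + 1)

lemma vecMul_isingMatrix_add (β : ℝ) (p : Fin 2 → ℝ) :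
    (p ᵥ* isingMatrix β) 0 + (p ᵥ* isingMatrix β) 1 = p 0 + p 1 := by
  simp only [vecMul, dotProduct, Fin.sum_univ_two, isingMatrix, ↓reduceIte, one_ne_zero,
    zero_ne_one]
  field_simp
  ring

lemma vecMul_isingMatrix_sub (β : ℝ) (p : Fin 2 → ℝ) :
    (p ᵥ* isingMatrix β) 0 - (p ᵥ* isingMatrix β) 1 = tanh β * (p 0 - p 1) := by
  simp only [vecMul, dotProduct, Fin.sum_univ_two, isingMatrix, ↓reduceIte, one_ne_zero,
    zero_ne_one, tanh_eq_exp_two_mul]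
  field_simp
  ring

lemma sum_sub_half_mul_log_two_mul {r : Fin 2 → ℝ} (hr : r 0 + r 1 = 1) :
    ∑ i, (r i - 1 / 2) * log (2 * r i) = (r 0 - r 1) * logRatio (r 0 - r 1) / 2 := by
  rw [Fin.sum_univ_two, logRatio, show 2 * r 0 = 1 + (r 0 - r 1) by linarith,
    show 2 * r 1 = 1 - (r 0 - r 1) by linarith]
  linear_combination (log (1 + (r 0 - r 1)) + log (1 - (r 0 - r 1))) / 2 * hr

theorem ising_contraction_tanh_sq_general (β : ℝ)
    (M : Matrix (Fin 2) (Fin 2) ℝ)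
    (hM : ∀ i j, M i j = if i = j then Real.exp (2*β) / (Real.exp (2*β) + 1)
                          else 1 / (Real.exp (2*β) + 1))
    (L : (Fin 2 → ℝ) → ℝ)
    (hL : ∀ r, L r = ∑ i, (r i - 1/2) * Real.log (2 * r i)) :
    (∀ p : Fin 2 → ℝ, (∀ i, 0 < p i) → (∑ i, p i = 1) →
        L (fun j => ∑ i, p i * M i j) ≤ (Real.tanh β)^2 * L p) ∧
    Tendsto (fun t : ℝ =>
        L (fun j => ∑ i, (fun i : Fin 2 => if i = 0 then t else 1 - t) i * M i j) /
          L (fun i : Fin 2 => if i = 0 then t else 1 - t))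
      (nhdsWithin (1/2 : ℝ) {(1/2 : ℝ)}ᶜ) (nhds ((Real.tanh β)^2)) := by
  obtain rfl : M = isingMatrix β := Matrix.ext hM
  have hL_bias {r : Fin 2 → ℝ} (hr : r 0 + r 1 = 1) :
      L r = (r 0 - r 1) * logRatio (r 0 - r 1) / 2 :=
    (hL r).trans (sum_sub_half_mul_log_two_mul hr)
  have hL_vecMul {p : Fin 2 → ℝ} (hp : p 0 + p 1 = 1) : L (p ᵥ* isingMatrix β) =
      tanh β * (p 0 - p 1) * logRatio (tanh β * (p 0 - p 1)) / 2 := by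
    rw [hL_bias (by rw [vecMul_isingMatrix_add, hp]), vecMul_isingMatrix_sub]
  constructor
  · intro p hp hsum
    rw [Fin.sum_univ_two] at hsum
    have hx : |p 0 - p 1| < 1 := abs_sub_lt_iff.2 ⟨by linarith [hp 1], by linarith [hp 0]⟩
    change L (p ᵥ* isingMatrix β) ≤ _
    rw [hL_vecMul hsum, hL_bias hsum]
    linarith [mul_logRatio_mul_le (abs_tanh_lt_one β).le hx]
  · let q (t : ℝ) : Fin 2 → ℝ := fun i => if i = 0 then t else 1 - t
    have hq_add (t : ℝ) : q t 0 + q t 1 = 1 := by simp [q]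
    have hq_sub (t : ℝ) : q t 0 - q t 1 = 2 * t - 1 := by
      simp only [q, ↓reduceIte, one_ne_zero]
      ring
    have hshift : Tendsto (fun t : ℝ => 2 * t - 1) (𝓝[≠] (1 / 2)) (𝓝[≠] 0) :=
      .inf ((by fun_prop : Continuous fun t : ℝ => 2 * t - 1).tendsto' _ _ (by norm_num))
        (tendsto_principal_principal.2 fun t (ht : t ≠ 1 / 2) (h : 2 * t - 1 = 0) =>
          ht (by linarith))
    refine ((tendsto_mul_logRatio_mul_div (tanh β)).comp hshift).congr fun t => ?_
    change _ = L (q t ᵥ* isingMatrix β) / L (q t)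
    rw [hL_vecMul (hq_add t), hL_bias (hq_add t), hq_sub, Function.comp_apply]
    exact (div_div_div_cancel_right₀ two_ne_zero _ _).symm

theorem ising_contraction_tanh_sq (β : ℝ) (hβ : 0 < β)
    (M : Matrix (Fin 2) (Fin 2) ℝ)
    (hM : ∀ i j, M i j = if i = j then Real.exp (2*β) / (Real.exp (2*β) + 1)
                          else 1 / (Real.exp (2*β) + 1))
    (L : (Fin 2 → ℝ) → ℝ)
    (hL : ∀ r, L r = ∑ i, (r i - 1/2) * Real.log (2 * r i)) :
    (∀ p : Fin 2 → ℝ, (∀ i, 0 < p i) → (∑ i, p i = 1) →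
        L (fun j => ∑ i, p i * M i j) ≤ (Real.tanh β)^2 * L p) ∧
    Tendsto (fun t : ℝ =>
        L (fun j => ∑ i, (fun i : Fin 2 => if i = 0 then t else 1 - t) i * M i j) /
          L (fun i : Fin 2 => if i = 0 then t else 1 - t))
      (nhdsWithin (1/2 : ℝ) {(1/2 : ℝ)}ᶜ) (nhds ((Real.tanh β)^2)) :=
  ising_contraction_tanh_sq_general β M hM L hL
end

section
/- For fixed probability vectors p and α with positive entries, the map M ↦ L(p M^rev) is convex on the set of stochastic matrices M with positive entries satisfying α M = α. -/
/-! `M ↦ p M^rev` is linear in `M` and maps positive matrices to positive vectors, while `L` is a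
sum of the one-variable functions `(x - a) log (x / a) = x log x - a log x - x log a + a log a`,
each convex on `x > 0`. A convex function composed with a linear map is convex. -/

open Finset Real Matrix

noncomputable section

variable {n : Type*}

theorem convexOn_sub_mul_log_div {a : ℝ} (ha : 0 < a) :
    ConvexOn ℝ (Set.Ioi 0) fun x => (x - a) * log (x / a) := by
  have h := ((convexOn_mul_log.subset Set.Ioi_subset_Ici_self (convex_Ioi 0)).sub
      ((strictConcaveOn_log_Ioi.concaveOn.smul ha.le).add
        ((log a • LinearMap.id : ℝ →ₗ[ℝ] ℝ).concaveOn (convex_Ioi 0)))).add_const (a * log a)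
  refine h.congr fun x (hx : 0 < x) => ?_
  simp only [Pi.sub_apply, Pi.add_apply, LinearMap.smul_apply, LinearMap.id_coe, id_eq,
    smul_eq_mul, log_div hx.ne' ha.ne']
  ring

/-- The symmetrised Kullback–Leibler divergence `KL(r ‖ α) + KL(α ‖ r)`. -/
def jeffreys [Fintype n] (α r : n → ℝ) : ℝ :=
  ∑ i, (r i - α i) * log (r i / α i)

theorem convexOn_jeffreys [Fintype n] {α : n → ℝ} (hα : ∀ i, 0 < α i) :
    ConvexOn ℝ {r | ∀ i, 0 < r i} (jeffreys α) := by
  refine ⟨fun _ hr _ hs _ _ ha hb hab i => convex_Ioi (0 : ℝ) (hr i) (hs i) ha hb hab, ?_⟩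
  intro r hr s hs a b ha hb hab
  simp only [jeffreys, smul_eq_mul, mul_sum, ← sum_add_distrib]
  exact sum_le_sum fun i _ => (convexOn_sub_mul_log_div (hα i)).2 (hr i) (hs i) ha hb hab

def reversal (α : n → ℝ) (M : Matrix n n ℝ) : Matrix n n ℝ :=
  of fun i j => α j * M j i / α i

theorem reversal_add (α : n → ℝ) (M N : Matrix n n ℝ) :
    reversal α (M + N) = reversal α M + reversal α N := by
  ext i j
  simp only [reversal, of_apply, Matrix.add_apply]
  ring

theorem reversal_smul (α : n → ℝ) (c : ℝ) (M : Matrix n n ℝ) :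
    reversal α (c • M) = c • reversal α M := by
  ext i j
  simp only [reversal, of_apply, Matrix.smul_apply, smul_eq_mul]
  ring

theorem vecMul_reversal_pos [Fintype n] {α p : n → ℝ} (hα : ∀ i, 0 < α i) (hp : ∀ i, 0 < p i)
    {M : Matrix n n ℝ} (hM : ∀ i j, 0 < M i j) (j : n) : 0 < (p ᵥ* reversal α M) j :=
  sum_pos (fun i _ => mul_pos (hp i) (div_pos (mul_pos (hα j) (hM j i)) (hα i)))
    ⟨j, mem_univ j⟩

theorem convexOn_jeffreys_vecMul_reversal [Fintype n] {α p : n → ℝ} (hα : ∀ i, 0 < α i)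
    (hp : ∀ i, 0 < p i) :
    ConvexOn ℝ {M : Matrix n n ℝ | ∀ i j, 0 < M i j}
      fun M => jeffreys α (p ᵥ* reversal α M) := by
  refine ⟨fun _ hM _ hN _ _ ha hb hab i j => convex_Ioi (0 : ℝ) (hM i j) (hN i j) ha hb hab, ?_⟩
  intro M hM N hN a b ha hb hab
  simp only [reversal_add, reversal_smul, vecMul_add, vecMul_smul]
  exact (convexOn_jeffreys hα).2 (vecMul_reversal_pos hα hp hM)
    (vecMul_reversal_pos hα hp hN) ha hb hab

end

theorem L_pMrev_convex_in_M_general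
    (q : ℕ) (α p : Fin q → ℝ)
    (hα : ∀ i, 0 < α i)
    (hp : ∀ i, 0 < p i)
    (L : (Fin q → ℝ) → ℝ)
    (hL : ∀ r, L r = ∑ i, (r i - α i) * Real.log (r i / α i))
    (M₁ M₂ : Matrix (Fin q) (Fin q) ℝ)
    (hM₁ : ∀ i j, 0 < M₁ i j)
    (hM₂ : ∀ i j, 0 < M₂ i j)
    (lam : ℝ) (hlam : lam ∈ Set.Icc (0:ℝ) 1) :
    L (fun j => ∑ i, p i *
        (α j * (lam * M₁ j i + (1 - lam) * M₂ j i) / α i))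
      ≤ lam * L (fun j => ∑ i, p i * (α j * M₁ j i / α i))
        + (1 - lam) * L (fun j => ∑ i, p i * (α j * M₂ j i / α i)) := by
  obtain rfl : L = jeffreys α := funext hL
  -- the three arguments of `L` are `p ᵥ* reversal α _` up to unfolding
  exact (convexOn_jeffreys_vecMul_reversal hα hp).2 hM₁ hM₂ hlam.1 (sub_nonneg.2 hlam.2)
    (add_sub_cancel lam 1)

theorem L_pMrev_convex_in_M
    (q : ℕ) (hq : 1 ≤ q) (α p : Fin q → ℝ)
    (hα : ∀ i, 0 < α i) (hαs : ∑ i, α i = 1)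
    (hp : ∀ i, 0 < p i) (hps : ∑ i, p i = 1)
    (L : (Fin q → ℝ) → ℝ)
    (hL : ∀ r, L r = ∑ i, (r i - α i) * Real.log (r i / α i))
    (M₁ M₂ : Matrix (Fin q) (Fin q) ℝ)
    (hM₁ : ∀ i j, 0 < M₁ i j) (hrow₁ : ∀ i, ∑ j, M₁ i j = 1)
    (hM₂ : ∀ i j, 0 < M₂ i j) (hrow₂ : ∀ i, ∑ j, M₂ i j = 1)
    (hinv₁ : ∀ j, ∑ i, α i * M₁ i j = α j)
    (hinv₂ : ∀ j, ∑ i, α i * M₂ i j = α j)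
    (lam : ℝ) (hlam : lam ∈ Set.Icc (0:ℝ) 1) :
    L (fun j => ∑ i, p i *
        (α j * (lam * M₁ j i + (1 - lam) * M₂ j i) / α i))
      ≤ lam * L (fun j => ∑ i, p i * (α j * M₁ j i / α i))
        + (1 - lam) * L (fun j => ∑ i, p i * (α j * M₂ j i / α i)) :=
  L_pMrev_convex_in_M_general q α p hα hp L hL M₁ M₂ hM₁ hM₂ lam hlam
end

section
/- Lemma 1 (boundary entropy identity) in the one-level case: for a star graph with root and children w₁,...,w_d, the expectation over boundary configurations ξ (drawn from the chain) of the symmetrized entropy L(π^ξ) of the posterior root distribution equals the double α-average of relative entropies between conditional boundary laws: ∫ P(dξ) L(π^ξ) = ∑_{x₁,x₂} α(x₁) α(x₂) S(Q^{x₂} | Q^{x₁}). -/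
open Finset Real

/-!
Write `P = ∑ α_x q_x` for the probability of a fixed boundary configuration and `q_x` for its
likelihood given root state `x`. Since `π_s / α_s = q_s / P`, the term `P (π_s - α_s) log (π_s / α_s)`
equals `(α_s q_s - P α_s) (log q_s - log P)`, and the `log P` part cancels because the weights
`α_s q_s - P α_s` sum to zero. Expanding `∑ α_{x₁} α_{x₂} q_{x₂} log (q_{x₂} / q_{x₁})` with
`∑ α = 1` gives the same sum `∑ (α_s q_s - P α_s) log q_s`; summing over the boundary finishes.
-/

section BayesEntropy

variable {X : Type*} [Fintype X]

theorem sum_sum_mul_mul_sub_eq (a b f : X → ℝ) (ha : ∑ i, a i = 1) :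
    ∑ i, ∑ j, a i * b j * (f j - f i) = ∑ i, (b i - (∑ j, b j) * a i) * f i := by
  have hexpand : ∀ i, ∑ j, a i * b j * (f j - f i) =
      a i * ∑ j, b j * f j - (∑ j, b j) * a i * f i := by
    intro i
    simp only [mul_sum, sum_mul, ← sum_sub_distrib]
    exact sum_congr rfl fun j _ => by ring
  simp only [hexpand, sum_sub_distrib, ← sum_mul, ha, one_mul, sub_mul]

theorem mul_posterior_entropy_eq_sum_sum {α q p : X → ℝ} {P : ℝ}
    (hα : ∀ i, 0 < α i) (hαs : ∑ i, α i = 1) (hq : ∀ i, 0 < q i)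
    (hP : P = ∑ i, α i * q i) (hp : ∀ s, p s = α s * q s / P) :
    P * ∑ s, (p s - α s) * log (p s / α s) =
      ∑ x₁, ∑ x₂, α x₁ * α x₂ * (q x₂ * log (q x₂ / q x₁)) := by
  have hX : (univ : Finset X).Nonempty := nonempty_of_sum_ne_zero (hαs ▸ one_ne_zero)
  have hP0 : 0 < P := hP ▸ sum_pos (fun i _ => mul_pos (hα i) (hq i)) hX
  have hterm : ∀ s, P * ((p s - α s) * log (p s / α s)) =
      (α s * q s - P * α s) * log (q s) - log P * (α s * q s - P * α s) := by
    intro s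
    have hratio : p s / α s = q s / P := by
      rw [hp]; field_simp [(hα s).ne']
    rw [hratio, log_div (hq s).ne' hP0.ne', hp]
    field_simp
  have hweights : ∑ s, (α s * q s - P * α s) = 0 := by
    rw [sum_sub_distrib, ← mul_sum, hαs, hP, mul_one, sub_self]
  calc P * ∑ s, (p s - α s) * log (p s / α s)
      = ∑ s, (α s * q s - P * α s) * log (q s) := by
        rw [mul_sum, sum_congr rfl fun s _ => hterm s, sum_sub_distrib, ← mul_sum, hweights,
          mul_zero, sub_zero]
    _ = ∑ x₁, ∑ x₂, α x₁ * (α x₂ * q x₂) * (log (q x₂) - log (q x₁)) := by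
        rw [sum_sum_mul_mul_sub_eq α (fun i => α i * q i) _ hαs, ← hP]
    _ = ∑ x₁, ∑ x₂, α x₁ * α x₂ * (q x₂ * log (q x₂ / q x₁)) := by
        refine sum_congr rfl fun x₁ _ => sum_congr rfl fun x₂ _ => ?_
        rw [log_div (hq x₂).ne' (hq x₁).ne']
        ring

end BayesEntropy

theorem boundary_entropy_identity_star_general
    (q d : ℕ)
    (M : Matrix (Fin q) (Fin q) ℝ) (α : Fin q → ℝ)
    (hM : ∀ i j, 0 < M i j)
    (hα : ∀ i, 0 < α i) (hαs : ∑ i, α i = 1)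
    (Q : Fin q → (Fin d → Fin q) → ℝ)
    (hQ : ∀ j ξ, Q j ξ = ∏ k, M j (ξ k))
    (Pbd : (Fin d → Fin q) → ℝ)
    (hPbd : ∀ ξ, Pbd ξ = ∑ x, α x * Q x ξ)
    (pi : (Fin d → Fin q) → Fin q → ℝ)
    (hpi : ∀ ξ s, pi ξ s = α s * Q s ξ / Pbd ξ)
    (L : (Fin q → ℝ) → ℝ)
    (hL : ∀ p, L p = ∑ i, (p i - α i) * Real.log (p i / α i))
    (S : ((Fin d → Fin q) → ℝ) → ((Fin d → Fin q) → ℝ) → ℝ)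
    (hS : ∀ Q₁ Q₂, S Q₁ Q₂ = ∑ ξ, Q₁ ξ * Real.log (Q₁ ξ / Q₂ ξ)) :
    ∑ ξ, Pbd ξ * L (pi ξ) = ∑ x₁, ∑ x₂, α x₁ * α x₂ * S (Q x₂) (Q x₁) := by
  have hQpos : ∀ j ξ, 0 < Q j ξ := fun j ξ => hQ j ξ ▸ prod_pos fun k _ => hM j (ξ k)
  calc ∑ ξ, Pbd ξ * L (pi ξ)
      = ∑ ξ, ∑ x₁, ∑ x₂, α x₁ * α x₂ * (Q x₂ ξ * log (Q x₂ ξ / Q x₁ ξ)) :=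
        sum_congr rfl fun ξ _ => hL (pi ξ) ▸
          mul_posterior_entropy_eq_sum_sum hα hαs (fun x => hQpos x ξ) (hPbd ξ) (hpi ξ)
    _ = ∑ x₁, ∑ x₂, α x₁ * α x₂ * S (Q x₂) (Q x₁) := by
        simp only [hS, mul_sum]
        rw [sum_comm]
        exact sum_congr rfl fun _ _ => sum_comm

/-- Boundary entropy identity (Lemma 1) for the one-level (star) tree:
the expected symmetrized entropy of the posterior root distribution equals the
double `α`-average of relative entropies between conditional boundary laws. -/
theorem boundary_entropy_identity_star
    (q d : ℕ) (hq : 1 ≤ q) (hd : 1 ≤ d)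
    (M : Matrix (Fin q) (Fin q) ℝ) (α : Fin q → ℝ)
    (hM : ∀ i j, 0 < M i j) (hrow : ∀ i, ∑ j, M i j = 1)
    (hα : ∀ i, 0 < α i) (hαs : ∑ i, α i = 1)
    (hinv : ∀ j, ∑ i, α i * M i j = α j)
    (Q : Fin q → (Fin d → Fin q) → ℝ)
    (hQ : ∀ j ξ, Q j ξ = ∏ k, M j (ξ k))
    (Pbd : (Fin d → Fin q) → ℝ)
    (hPbd : ∀ ξ, Pbd ξ = ∑ x, α x * Q x ξ)
    (pi : (Fin d → Fin q) → Fin q → ℝ)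
    (hpi : ∀ ξ s, pi ξ s = α s * Q s ξ / Pbd ξ)
    (L : (Fin q → ℝ) → ℝ)
    (hL : ∀ p, L p = ∑ i, (p i - α i) * Real.log (p i / α i))
    (S : ((Fin d → Fin q) → ℝ) → ((Fin d → Fin q) → ℝ) → ℝ)
    (hS : ∀ Q₁ Q₂, S Q₁ Q₂ = ∑ ξ, Q₁ ξ * Real.log (Q₁ ξ / Q₂ ξ)) :
    ∑ ξ, Pbd ξ * L (pi ξ) = ∑ x₁, ∑ x₂, α x₁ * α x₂ * S (Q x₂) (Q x₁) :=
  boundary_entropy_identity_star_general q d M α hM hα hαs Q hQ Pbd hPbd pi hpi L hL S hS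
end
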